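/- arXiv:1709.04123 — 3 statements merged into one kernel-verified Lean document; each statement's English description precedes it below -/
import Mathlib

section
/- The payoff function π is monotone nondecreasing in seeds from the interior, but it is neither submodular nor supermodular in general: there exists a graph G, thresholds, and p = q = 1 for which both the submodularity and the supermodularity inequalities fail. -/
/-- One step of exposure: `b` hears about the product from `a`,
which requires `a` to be adjacent to `b` and `a` to be accepting. -/
def step {V : Type*} (G : SimpleGraph V) (acc : V → Prop) (a b : V) : Prop :=
  G.Adj a b ∧ acc a

/-- `reach G acc i j`: there is a path from `i` to `j` all of whose
nodes other than possibly `j` are accepting. -/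
def reach {V : Type*} (G : SimpleGraph V) (acc : V → Prop) : V → V → Prop :=
  Relation.ReflTransGen (step G acc)

/-- `V(S)`: the set of nodes exposed to the product when `S` is seeded. -/
def exposedSet {V : Type*} (G : SimpleGraph V) (acc : V → Prop) (S : Set V) : Set V :=
  {j | ∃ i ∈ S, reach G acc i j}

/-- `V^+(S)`: exposed accepting nodes. -/
def Vpos {V : Type*} (G : SimpleGraph V) (acc : V → Prop) (S : Set V) : Set V :=
  {j | j ∈ exposedSet G acc S ∧ acc j}

/-- `V^-(S)`: exposed rejecting nodes. -/
def Vneg {V : Type*} (G : SimpleGraph V) (acc : V → Prop) (S : Set V) : Set V :=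
  {j | j ∈ exposedSet G acc S ∧ ¬ acc j}

/-- Payoff `π(S) = p|V^+(S)| - q|V^-(S)|`. -/
noncomputable def payoff {V : Type*} (p q : ℝ) (G : SimpleGraph V) (acc : V → Prop)
    (S : Set V) : ℝ :=
  p * (Vpos G acc S).ncard - q * (Vneg G acc S).ncard

/-!
Seeding a node that is already exposed changes nothing: whatever it reaches is reached
through it from `S`, so `π` does not move. On the path `0 – 1 – 2` whose middle node
rejects, either endpoint alone exposes itself and the middle node (`π = p - q`), while
both endpoints pay for the middle node only once (`π = 2p - q`); so seeding `0` gains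
more once `2` is seeded, and `π` is not submodular. On a single edge of accepting nodes
one seed already exposes both ends, so the second seed gains `2p` alone and `0` after
the first, and `π` is not supermodular.
-/

open SimpleGraph Finset

section Exposure

variable {V : Type*} {G : SimpleGraph V} {acc : V → Prop} {S T : Set V}

lemma subset_exposedSet : S ⊆ exposedSet G acc S :=
  fun i hi => ⟨i, hi, .refl⟩

lemma adj_mem_exposedSet {a b : V} (ha : a ∈ exposedSet G acc S) (hacc : acc a)
    (hab : G.Adj a b) : b ∈ exposedSet G acc S :=
  let ⟨i, hi, hia⟩ := ha
  ⟨i, hi, hia.tail ⟨hab, hacc⟩⟩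

lemma exposedSet_subset_of_closed (hST : S ⊆ T)
    (hT : ∀ a ∈ T, acc a → ∀ b, G.Adj a b → b ∈ T) : exposedSet G acc S ⊆ T := by
  rintro j ⟨i, hi, hij⟩
  induction hij with
  | refl => exact hST hi
  | tail _ hstep ih => exact hT _ ih hstep.2 _ hstep.1

@[simp]
lemma exposedSet_empty : exposedSet G acc ∅ = ∅ := by
  simp [exposedSet]

lemma exposedSet_union :
    exposedSet G acc (S ∪ T) = exposedSet G acc S ∪ exposedSet G acc T := by
  ext j
  simp [exposedSet, or_and_right, exists_or]

lemma exposedSet_singleton_subset {x : V} (hx : x ∈ exposedSet G acc S) :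
    exposedSet G acc {x} ⊆ exposedSet G acc S := by
  obtain ⟨i, hi, hix⟩ := hx
  rintro j ⟨_, rfl, hxj⟩
  exact ⟨i, hi, hix.trans hxj⟩

lemma exposedSet_union_singleton_of_mem {x : V} (hx : x ∈ exposedSet G acc S) :
    exposedSet G acc (S ∪ {x}) = exposedSet G acc S := by
  rw [exposedSet_union, Set.union_eq_left.2 (exposedSet_singleton_subset hx)]

lemma payoff_union_singleton_of_mem {p q : ℝ} {x : V} (hx : x ∈ exposedSet G acc S) :
    payoff p q G acc (S ∪ {x}) = payoff p q G acc S := by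
  simp only [payoff, Vpos, Vneg, exposedSet_union_singleton_of_mem hx]

@[simp]
lemma payoff_empty {p q : ℝ} : payoff p q G acc ∅ = 0 := by
  simp [payoff, Vpos, Vneg]

lemma payoff_of_exposedSet_eq [DecidablePred acc] {p q : ℝ} {E : Finset V}
    (hE : exposedSet G acc S = E) :
    payoff p q G acc S = p * #{j ∈ E | acc j} - q * #{j ∈ E | ¬ acc j} := by
  simp only [payoff, Vpos, Vneg, hE, Finset.mem_coe, ← Finset.coe_filter, Set.ncard_coe_finset]

lemma exposedSet_singleton_of_forall_adj_not_acc {x : V} (hx : acc x)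
    (hN : ∀ b, G.Adj x b → ¬ acc b) :
    exposedSet G acc {x} = insert x (G.neighborSet x) := by
  refine (exposedSet_subset_of_closed (by simp) ?_).antisymm ?_
  · rintro a (rfl | hxa) hacc b hab
    · exact Or.inr hab
    · exact absurd hacc (hN a hxa)
  · rintro b (rfl | hxb)
    · exact subset_exposedSet rfl
    · exact adj_mem_exposedSet (subset_exposedSet rfl) hx hxb

lemma exposedSet_eq_univ_of_connected (hG : G.Connected) (hacc : ∀ v, acc v) (hS : S.Nonempty) :
    exposedSet G acc S = Set.univ := by
  obtain ⟨i, hi⟩ := hS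
  refine Set.eq_univ_of_forall fun j => ⟨i, hi, ?_⟩
  exact Relation.ReflTransGen.mono (fun a b hab => ⟨hab, hacc a⟩) i j
    ((reachable_iff_reflTransGen i j).1 (hG i j))

end Exposure

section Witnesses

variable {p q : ℝ}

lemma exposedSet_pathGraph_three_zero :
    exposedSet (pathGraph 3) (· ≠ 1) {0} = ↑({0, 1} : Finset (Fin 3)) := by
  rw [exposedSet_singleton_of_forall_adj_not_acc (by decide)
    (fun b hb => by rw [pathGraph_adj] at hb; omega)]
  ext j; fin_cases j <;> simp [pathGraph_adj]

lemma exposedSet_pathGraph_three_two :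
    exposedSet (pathGraph 3) (· ≠ 1) {2} = ↑({1, 2} : Finset (Fin 3)) := by
  rw [exposedSet_singleton_of_forall_adj_not_acc (by decide)
    (fun b hb => by rw [pathGraph_adj] at hb; omega)]
  ext j; fin_cases j <;> simp [pathGraph_adj]

lemma payoff_pathGraph_three_zero : payoff p q (pathGraph 3) (· ≠ 1) {0} = p - q := by
  rw [payoff_of_exposedSet_eq exposedSet_pathGraph_three_zero]
  simp [Finset.filter_insert, Finset.filter_singleton]

lemma payoff_pathGraph_three_two : payoff p q (pathGraph 3) (· ≠ 1) {2} = p - q := by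
  rw [payoff_of_exposedSet_eq exposedSet_pathGraph_three_two]
  simp [Finset.filter_insert, Finset.filter_singleton]

lemma payoff_pathGraph_three_two_zero :
    payoff p q (pathGraph 3) (· ≠ 1) ({2} ∪ {0}) = 2 * p - q := by
  have h : exposedSet (pathGraph 3) (· ≠ 1) ({2} ∪ {0}) = ↑({0, 1, 2} : Finset (Fin 3)) := by
    rw [exposedSet_union, exposedSet_pathGraph_three_two, exposedSet_pathGraph_three_zero,
      ← Finset.coe_union]
    exact congrArg _ (by decide)
  rw [payoff_of_exposedSet_eq h]
  simp [Finset.filter_insert, Finset.filter_singleton, mul_comm]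

lemma payoff_top_fin_two {S : Set (Fin 2)} (hS : S.Nonempty) :
    payoff p q ⊤ (fun _ => True) S = 2 * p := by
  have h := exposedSet_eq_univ_of_connected connected_top (fun _ => trivial) hS
  rw [payoff_of_exposedSet_eq (h.trans Finset.coe_univ.symm)]
  simp [mul_comm]

end Witnesses

/-- The payoff is monotone nondecreasing when adding seeds from
the interior `V^+(S)`, but it is neither submodular nor supermodular in
general: there is an instance with `p = q = 1` where the submodularity
inequality fails, and one where the supermodularity inequality fails. -/
theorem payoff_monotone_interior_not_sub_or_supermodular :
    (∀ (V : Type) [Fintype V] (G : SimpleGraph V) (acc : V → Prop) (p q : ℝ),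
      0 < p → 0 < q → ∀ S : Set V, (∀ i ∈ S, acc i) →
      ∀ x ∈ Vpos G acc S,
        payoff p q G acc S ≤ payoff p q G acc (S ∪ {x})) ∧
    (∃ (n : ℕ) (G : SimpleGraph (Fin n)) (acc : Fin n → Prop)
        (S' S : Set (Fin n)) (x : Fin n),
      (∀ i ∈ S ∪ S' ∪ {x}, acc i) ∧ S' ⊆ S ∧ x ∉ S ∧
      payoff 1 1 G acc (S' ∪ {x}) - payoff 1 1 G acc S' <
        payoff 1 1 G acc (S ∪ {x}) - payoff 1 1 G acc S) ∧
    (∃ (n : ℕ) (G : SimpleGraph (Fin n)) (acc : Fin n → Prop)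
        (S' S : Set (Fin n)) (x : Fin n),
      (∀ i ∈ S ∪ S' ∪ {x}, acc i) ∧ S' ⊆ S ∧ x ∉ S ∧
      payoff 1 1 G acc (S ∪ {x}) - payoff 1 1 G acc S <
        payoff 1 1 G acc (S' ∪ {x}) - payoff 1 1 G acc S') := by
  refine ⟨fun V _ G acc p q _ _ S _ x hx => (payoff_union_singleton_of_mem hx.1).ge, ?_, ?_⟩
  · refine ⟨3, pathGraph 3, (· ≠ 1), ∅, {2}, 0, by simp, Set.empty_subset _, by simp, ?_⟩
    rw [Set.empty_union, payoff_empty, payoff_pathGraph_three_zero, payoff_pathGraph_three_two,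
      payoff_pathGraph_three_two_zero]
    norm_num
  · refine ⟨2, ⊤, fun _ => True, ∅, {0}, 1, by simp, Set.empty_subset _, by simp, ?_⟩
    rw [Set.empty_union, payoff_empty, payoff_top_fin_two (by simp), payoff_top_fin_two (by simp),
      payoff_top_fin_two (by simp)]
    norm_num
end

section
/- In the generalized model, if S' is an optimal seed set for the subgraph G' induced on agents of Types II and IV, then S' ∪ T_3 is an optimal seed set for the full graph G, and π_G(S' ∪ T_3) = π_{G'}(S') + p·|T_3|. -/
/-- Type I agents: `φ < τ_i` (they ignore the product). -/
def T1 {V : Type*} (τ : V → ℝ) (φ : ℝ) : Set V := {i | φ < τ i}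

/-- Type II agents: `τ_i ≤ φ < θ_i` (they view but reject the product). -/
def T2 {V : Type*} (τ θ : V → ℝ) (φ : ℝ) : Set V := {i | τ i ≤ φ ∧ φ < θ i}

/-- Type III agents: `θ_i ≤ φ < σ_i` (they accept but do not advertise). -/
def T3 {V : Type*} (θ σ : V → ℝ) (φ : ℝ) : Set V := {i | θ i ≤ φ ∧ φ < σ i}

/-- Type IV agents: `σ_i ≤ φ` (they accept and advertise to all neighbors). -/
def T4 {V : Type*} (σ : V → ℝ) (φ : ℝ) : Set V := {i | σ i ≤ φ}

/-- `V(S)` in the generalized model: agents reachable from the seed set `S`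
by a path all of whose internal nodes are Type IV (advertising) agents. -/
def gExposed {V : Type*} (G : SimpleGraph V) (σ : V → ℝ) (φ : ℝ) (S : Set V) : Set V :=
  {j | ∃ i ∈ S, Relation.ReflTransGen (fun a b => G.Adj a b ∧ σ a ≤ φ) i j}

/-- Generalized payoff:
`π(S) = p·|V(S) ∩ (T_3 ∪ T_4)| − q·|V(S) ∩ T_2|`. -/
noncomputable def gPayoff {V : Type*} (p q : ℝ) (G : SimpleGraph V)
    (τ θ σ : V → ℝ) (φ : ℝ) (S : Set V) : ℝ :=
  p * ((gExposed G σ φ S ∩ (T3 θ σ φ ∪ T4 σ φ)).ncard : ℝ)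
    - q * ((gExposed G σ φ S ∩ T2 τ θ φ).ncard : ℝ)

/-- `V(S')` in the induced subgraph `G'` on agents of Types II and IV:
nodes of `G'` reachable from `S'` by paths inside `G'` whose internal
nodes are Type IV (the accepting/advertising nodes of `G'`). -/
def subExposed {V : Type*} (G : SimpleGraph V) (τ θ σ : V → ℝ) (φ : ℝ)
    (S : Set V) : Set V :=
  {j | j ∈ T2 τ θ φ ∪ T4 σ φ ∧ ∃ i ∈ S,
    Relation.ReflTransGen
      (fun a b => G.Adj a b ∧ a ∈ T2 τ θ φ ∪ T4 σ φ ∧ b ∈ T2 τ θ φ ∪ T4 σ φ ∧ σ a ≤ φ)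
      i j}

/-- Payoff in the subgraph `G'` (basic model: Type IV accepting, Type II rejecting). -/
noncomputable def subPayoff {V : Type*} (p q : ℝ) (G : SimpleGraph V)
    (τ θ σ : V → ℝ) (φ : ℝ) (S : Set V) : ℝ :=
  p * ((subExposed G τ θ σ φ S ∩ T4 σ φ).ncard : ℝ)
    - q * ((subExposed G τ θ σ φ S ∩ T2 τ θ φ).ncard : ℝ)

/-!
Type III agents accept the product but never pass it on, so seeding them adds exactly `p` each
and nothing else; every other contribution to `π_G(S)` is that of `S` in `G'`, which cannot
exceed `π_{G'}(S ∩ T_4)`: seeds that do not advertise reach nobody beyond themselves, and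
exposed rejecting seeds only cost.
-/

section
variable {V : Type*} {G : SimpleGraph V} {τ θ σ : V → ℝ} {φ : ℝ}

lemma T3_disjoint_T4 : Disjoint (T3 θ σ φ) (T4 σ φ) :=
  Set.disjoint_left.2 fun _ h3 h4 => not_le.2 h3.2 h4

lemma T3_disjoint_T2 : Disjoint (T3 θ σ φ) (T2 τ θ φ) :=
  Set.disjoint_left.2 fun _ h3 h2 => not_le.2 h2.2 h3.1

lemma subset_gExposed (S : Set V) : S ⊆ gExposed G σ φ S :=
  fun i hi => ⟨i, hi, .refl⟩

lemma gExposed_mono {S T : Set V} (h : S ⊆ T) : gExposed G σ φ S ⊆ gExposed G σ φ T :=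
  fun _ ⟨i, hi, hr⟩ => ⟨i, h hi, hr⟩

lemma gExposed_union (S T : Set V) :
    gExposed G σ φ (S ∪ T) = gExposed G σ φ S ∪ gExposed G σ φ T := by
  ext j
  simp only [gExposed, Set.mem_union, Set.mem_ofPred_eq, or_and_right, exists_or]

lemma gExposed_of_forall_lt {S : Set V} (hS : ∀ i ∈ S, φ < σ i) : gExposed G σ φ S = S := by
  refine Set.Subset.antisymm ?_ (subset_gExposed S)
  rintro j ⟨i, hi, h⟩
  rcases h.cases_head with rfl | ⟨_, ⟨_, hσ⟩, _⟩
  · exact hi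
  · exact absurd hσ (not_le.2 (hS i hi))

lemma gExposed_union_T3 (S : Set V) :
    gExposed G σ φ (S ∪ T3 θ σ φ) = gExposed G σ φ S ∪ T3 θ σ φ := by
  rw [gExposed_union, gExposed_of_forall_lt (S := T3 θ σ φ) fun _ hi => hi.2]

/-- A path leaving a seed starts at an advertiser, unless it is empty. -/
lemma gExposed_inter_T4 (S : Set V) :
    gExposed G σ φ (S ∩ T4 σ φ) ∩ T4 σ φ = gExposed G σ φ S ∩ T4 σ φ := by
  have hmono : gExposed G σ φ (S ∩ T4 σ φ) ⊆ gExposed G σ φ S :=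
    gExposed_mono Set.inter_subset_left
  refine Set.Subset.antisymm (Set.inter_subset_inter_left _ hmono) ?_
  rintro j ⟨⟨i, hi, h⟩, hj⟩
  refine ⟨?_, hj⟩
  rcases h.cases_head with rfl | ⟨_, ⟨_, hσ⟩, _⟩
  · exact subset_gExposed _ ⟨hi, hj⟩
  · exact ⟨i, ⟨hi, hσ⟩, h⟩

/-- Every internal node of a path in `G` is an advertiser, hence a node of `G'`. -/
lemma subExposed_eq (S : Set V) :
    subExposed G τ θ σ φ S = gExposed G σ φ S ∩ (T2 τ θ φ ∪ T4 σ φ) := by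
  ext j
  constructor
  · rintro ⟨hj, i, hi, h⟩
    exact ⟨⟨i, hi, Relation.ReflTransGen.mono (fun _ _ h => ⟨h.1, h.2.2.2⟩) _ _ h⟩, hj⟩
  · rintro ⟨⟨i, hi, h⟩, hj⟩
    refine ⟨hj, i, hi, ?_⟩
    induction h with
    | refl => exact .refl
    | tail _ hstep ih =>
      exact (ih (Or.inr hstep.2)).tail ⟨hstep.1, Or.inr hstep.2, hj, hstep.2⟩

lemma subPayoff_eq (p q : ℝ) (S : Set V) :
    subPayoff p q G τ θ σ φ S =
      p * ((gExposed G σ φ S ∩ T4 σ φ).ncard : ℝ)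
        - q * ((gExposed G σ φ S ∩ T2 τ θ φ).ncard : ℝ) := by
  rw [subPayoff, subExposed_eq, Set.inter_assoc, Set.union_inter_cancel_right, Set.inter_assoc,
    Set.union_inter_cancel_left]

lemma gPayoff_eq_subPayoff_add [Finite V] (p q : ℝ) (S : Set V) :
    gPayoff p q G τ θ σ φ S =
      subPayoff p q G τ θ σ φ S + p * ((gExposed G σ φ S ∩ T3 θ σ φ).ncard : ℝ) := by
  have hdisj : Disjoint (gExposed G σ φ S ∩ T3 θ σ φ) (gExposed G σ φ S ∩ T4 σ φ) :=
    T3_disjoint_T4.mono Set.inter_subset_right Set.inter_subset_right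
  rw [gPayoff, subPayoff_eq, Set.inter_union_distrib_left, Set.ncard_union_eq hdisj]
  push_cast
  ring

lemma subPayoff_union_T3 (p q : ℝ) (S : Set V) :
    subPayoff p q G τ θ σ φ (S ∪ T3 θ σ φ) = subPayoff p q G τ θ σ φ S := by
  rw [subPayoff_eq, subPayoff_eq, gExposed_union_T3, Set.union_inter_distrib_right,
    Set.union_inter_distrib_right, T3_disjoint_T4.inter_eq, T3_disjoint_T2.inter_eq,
    Set.union_empty, Set.union_empty]

lemma subPayoff_le_subPayoff_inter_T4 [Finite V] {p q : ℝ} (hq : 0 ≤ q) (S : Set V) :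
    subPayoff p q G τ θ σ φ S ≤ subPayoff p q G τ θ σ φ (S ∩ T4 σ φ) := by
  rw [subPayoff_eq, subPayoff_eq, gExposed_inter_T4]
  have hT2 : (gExposed G σ φ (S ∩ T4 σ φ) ∩ T2 τ θ φ).ncard ≤
      (gExposed G σ φ S ∩ T2 τ θ φ).ncard :=
    Set.ncard_le_ncard (Set.inter_subset_inter_left _ (gExposed_mono Set.inter_subset_left))
  gcongr

end

theorem subgraph_opt_gives_opt_general {V : Type*} [Fintype V] (G : SimpleGraph V)
    (τ θ σ : V → ℝ) (φ : ℝ) (p q : ℝ) (hp : 0 < p) (hq : 0 < q)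
    (S' : Set V)
    (hopt : ∀ T : Set V, T ⊆ T4 σ φ →
      subPayoff p q G τ θ σ φ T ≤ subPayoff p q G τ θ σ φ S') :
    gPayoff p q G τ θ σ φ (S' ∪ T3 θ σ φ) =
      subPayoff p q G τ θ σ φ S' + p * ((T3 θ σ φ).ncard : ℝ) ∧
    (∀ S : Set V, gPayoff p q G τ θ σ φ S ≤
      gPayoff p q G τ θ σ φ (S' ∪ T3 θ σ φ)) := by
  have hopt_val : gPayoff p q G τ θ σ φ (S' ∪ T3 θ σ φ) =
      subPayoff p q G τ θ σ φ S' + p * ((T3 θ σ φ).ncard : ℝ) := by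
    rw [gPayoff_eq_subPayoff_add, subPayoff_union_T3, gExposed_union_T3,
      Set.union_inter_cancel_right]
  refine ⟨hopt_val, fun S => ?_⟩
  calc gPayoff p q G τ θ σ φ S
      = subPayoff p q G τ θ σ φ S + p * ((gExposed G σ φ S ∩ T3 θ σ φ).ncard : ℝ) :=
        gPayoff_eq_subPayoff_add p q S
    _ ≤ subPayoff p q G τ θ σ φ (S ∩ T4 σ φ) + p * ((T3 θ σ φ).ncard : ℝ) := by
        gcongr ?_ + p * ?_
        · exact subPayoff_le_subPayoff_inter_T4 hq.le S
        · exact_mod_cast Set.ncard_le_ncard Set.inter_subset_right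
    _ ≤ subPayoff p q G τ θ σ φ S' + p * ((T3 θ σ φ).ncard : ℝ) := by
        gcongr
        exact hopt _ Set.inter_subset_right
    _ = gPayoff p q G τ θ σ φ (S' ∪ T3 θ σ φ) := hopt_val.symm

/-- If `S'` is an optimal seed set for the subgraph `G'` induced
on agents of Types II and IV, then `S' ∪ T_3` is an optimal seed set for the
full graph `G`, and `π_G(S' ∪ T_3) = π_{G'}(S') + p·|T_3|`. -/
theorem subgraph_opt_gives_opt {V : Type*} [Fintype V] (G : SimpleGraph V)
    (τ θ σ : V → ℝ) (φ : ℝ) (p q : ℝ) (hp : 0 < p) (hq : 0 < q)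
    (hord : ∀ i, τ i ≤ θ i ∧ θ i ≤ σ i)
    (S' : Set V) (hS' : S' ⊆ T4 σ φ)
    (hopt : ∀ T : Set V, T ⊆ T4 σ φ →
      subPayoff p q G τ θ σ φ T ≤ subPayoff p q G τ θ σ φ S') :
    gPayoff p q G τ θ σ φ (S' ∪ T3 θ σ φ) =
      subPayoff p q G τ θ σ φ S' + p * ((T3 θ σ φ).ncard : ℝ) ∧
    (∀ S : Set V, gPayoff p q G τ θ σ φ S ≤
      gPayoff p q G τ θ σ φ (S' ∪ T3 θ σ φ)) :=
  subgraph_opt_gives_opt_general G τ θ σ φ p q hp hq S' hopt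
end

section
/- Combining the two directions of the reduction: a d-regular graph G (with d ≥ k) contains a k-clique if and only if the subdivided instance G' (with q = 1, p = d − (k−1)/2 + ε, 0 < ε < 1/k²) admits a seed set S of size at most k with π(S) > 0. -/
/-- The graph `G'` obtained from `G` by subdividing every edge: its nodes are
the original nodes (`Sum.inl v`) and one subdivision node per edge
(`Sum.inr e`), with `Sum.inl v` adjacent to `Sum.inr e` iff `v` is an
endpoint of `e`. -/
def subdiv {V : Type*} (G : SimpleGraph V) : SimpleGraph (V ⊕ G.edgeSet) where
  Adj x y :=
    (∃ (v : V) (e : G.edgeSet), x = Sum.inl v ∧ y = Sum.inr e ∧ v ∈ (e : Sym2 V)) ∨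
    (∃ (v : V) (e : G.edgeSet), y = Sum.inl v ∧ x = Sum.inr e ∧ v ∈ (e : Sym2 V))
  symm := by
    constructor
    rintro x y (h | h)
    · exact Or.inr h
    · exact Or.inl h
  loopless := by
    constructor
    rintro x (⟨v, e, h1, h2, _⟩ | ⟨v, e, h1, h2, _⟩) <;> subst h1 <;> simp at h2

/-- In `G'`, original nodes are accepting and subdivision nodes are rejecting. -/
def subdivAcc {V : Type*} (G : SimpleGraph V) : V ⊕ G.edgeSet → Prop :=
  fun x => x.isLeft = true

/-!
Seeding a set `S` of original nodes exposes exactly `S` and the subdivision nodes of the edges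
meeting `S`. An edge meeting `S` has one or two endpoints in `S`, so double counting gives
`#{edges meeting S} = d * #S - e(S)`, where `e(S)` counts the edges inside `S`; hence
`π(S) = e(S) - #S * ((k - 1) / 2 - ε)`. Since `e(S) ≤ (#S).choose 2`, with equality exactly
for cliques, a `k`-clique has payoff `k * ε > 0`; conversely a positive payoff with `#S ≤ k`
forces `#S = k`, and then `e(S) > k.choose 2 - k * ε > k.choose 2 - 1`, so `S` is a clique.
-/

open Finset

theorem Finset.card_inter_eq_of_card_eq_two {V : Type*} [DecidableEq V] {t : Finset V}
    (ht : #t = 2) (S : Finset V) :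
    #(t ∩ S) = (if (t ∩ S).Nonempty then 1 else 0) + (if t ⊆ S then 1 else 0) := by
  have hle : #(t ∩ S) ≤ 2 := ht ▸ card_le_card inter_subset_left
  have hsub : t ⊆ S ↔ #(t ∩ S) = 2 :=
    ⟨fun h => by rw [inter_eq_left.2 h, ht],
      fun h => inter_eq_left.1 (eq_of_subset_of_card_le inter_subset_left (by omega))⟩
  split_ifs with hne hts hts <;> rw [← card_pos] at hne <;> rw [hsub] at hts <;> omega

namespace SimpleGraph

variable {V : Type*} (G : SimpleGraph V) [DecidableRel G.Adj]

theorem card_edgeFinset_eq_card_choose_two_iff [Fintype V] [DecidableEq V] :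
    #G.edgeFinset = (Fintype.card V).choose 2 ↔ G = ⊤ := by
  rw [← card_edgeFinset_top_eq_card_choose_two]
  refine ⟨fun h => ?_, fun h => by subst h; congr!⟩
  exact edgeFinset_inj.1 <| eq_of_subset_of_card_le (edgeFinset_mono le_top) h.ge

theorem card_edgeFinset_induce_le (S : Finset V) :
    #(G.induce (S : Set V)).edgeFinset ≤ (#S).choose 2 := by
  simpa using (G.induce (S : Set V)).card_edgeFinset_le_card_choose_two

theorem card_edgeFinset_induce_eq_iff_isClique [DecidableEq V] (S : Finset V) :
    #(G.induce (S : Set V)).edgeFinset = (#S).choose 2 ↔ G.IsClique (S : Set V) := by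
  rw [← induce_eq_top, ← card_edgeFinset_eq_card_choose_two_iff]
  simp

theorem sum_degree_eq_card_incident_add_card_induce [Fintype V] [DecidableEq V]
    (S : Finset V) :
    ∑ v ∈ S, G.degree v =
      #{e ∈ G.edgeFinset | ∃ v ∈ S, v ∈ e} + #(G.induce (S : Set V)).edgeFinset := by
  rw [← card_filter_edgeFinset_toFinset_subset]
  calc ∑ v ∈ S, G.degree v = ∑ v ∈ S, #{e ∈ G.edgeFinset | v ∈ e} := by
        simp_rw [← card_incidenceFinset_eq_degree, incidenceFinset_eq_filter]
    _ = ∑ e ∈ G.edgeFinset, #(e.toFinset ∩ S) := by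
        have hdouble := sum_card_bipartiteAbove_eq_sum_card_bipartiteBelow
          (s := S) (t := G.edgeFinset) (r := fun v e => v ∈ e)
        simp only [bipartiteAbove, bipartiteBelow] at hdouble
        rw [hdouble]
        refine sum_congr rfl fun e _ => congrArg card ?_
        ext v
        simp [Sym2.mem_toFinset, and_comm]
    _ = ∑ e ∈ G.edgeFinset,
          ((if (e.toFinset ∩ S).Nonempty then 1 else 0) + if e.toFinset ⊆ S then 1 else 0) :=
        sum_congr rfl fun e he => card_inter_eq_of_card_eq_two
          (Sym2.card_toFinset_of_not_isDiag e (G.not_isDiag_of_mem_edgeSet (mem_edgeFinset.1 he))) S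
    _ = _ := by
        rw [sum_add_distrib, ← card_filter, ← card_filter]
        congr 2
        ext e
        simp [Finset.Nonempty, Sym2.mem_toFinset, and_comm]

end SimpleGraph

section Subdivision

variable {V : Type*} (G : SimpleGraph V)

theorem reach_subdiv_inl_iff (v : V) (x : V ⊕ G.edgeSet) :
    reach (subdiv G) (subdivAcc G) (Sum.inl v) x ↔
      x = Sum.inl v ∨ ∃ e : G.edgeSet, x = Sum.inr e ∧ v ∈ (e : Sym2 V) := by
  constructor
  · intro h
    induction h with
    | refl => exact Or.inl rfl
    | tail _ hstep ih =>
      obtain ⟨hadj, hacc⟩ := hstep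
      rcases ih with rfl | ⟨e, rfl, -⟩
      · rcases hadj with ⟨w, e, hw, rfl, hwe⟩ | ⟨w, e, -, hw, -⟩
        · cases Sum.inl_injective hw
          exact Or.inr ⟨e, rfl, hwe⟩
        · cases hw
      · simp [subdivAcc] at hacc
  · rintro (rfl | ⟨e, rfl, hve⟩)
    · exact .refl
    · exact .single ⟨Or.inl ⟨v, e, rfl, rfl, hve⟩, rfl⟩

theorem Vpos_subdiv_image_inl (S : Set V) :
    Vpos (subdiv G) (subdivAcc G) (Sum.inl '' S) = Sum.inl '' S := by
  ext x
  simp only [Vpos, exposedSet, Set.exists_mem_image, reach_subdiv_inl_iff]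
  constructor
  · rintro ⟨⟨v, hv, rfl | ⟨e, rfl, -⟩⟩, hacc⟩
    · exact ⟨v, hv, rfl⟩
    · simp [subdivAcc] at hacc
  · rintro ⟨v, hv, rfl⟩
    exact ⟨⟨v, hv, Or.inl rfl⟩, rfl⟩

theorem Vneg_subdiv_image_inl (S : Set V) :
    Vneg (subdiv G) (subdivAcc G) (Sum.inl '' S) =
      Sum.inr '' {e : G.edgeSet | ∃ v ∈ S, v ∈ (e : Sym2 V)} := by
  ext x
  simp only [Vneg, exposedSet, Set.exists_mem_image, reach_subdiv_inl_iff]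
  constructor
  · rintro ⟨⟨v, hv, rfl | ⟨e, rfl, hve⟩⟩, hacc⟩
    · exact absurd rfl hacc
    · exact ⟨e, ⟨v, hv, hve⟩, rfl⟩
  · rintro ⟨e, ⟨v, hv, hve⟩, rfl⟩
    exact ⟨⟨v, hv, Or.inr ⟨e, rfl, hve⟩⟩, by simp [subdivAcc]⟩

variable [Fintype V] [DecidableEq V] [DecidableRel G.Adj]

theorem payoff_subdiv_image_inl (p : ℝ) (S : Finset V) :
    payoff p 1 (subdiv G) (subdivAcc G) (Sum.inl '' (S : Set V)) =
      p * #S - #{e ∈ G.edgeFinset | ∃ v ∈ S, v ∈ e} := by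
  rw [payoff, Vpos_subdiv_image_inl, Vneg_subdiv_image_inl,
    Set.ncard_image_of_injective _ Sum.inl_injective, Set.ncard_coe_finset,
    Set.ncard_image_of_injective _ Sum.inr_injective,
    ← Set.ncard_image_of_injective _ Subtype.val_injective, one_mul]
  congr
  rw [← Set.ncard_coe_finset]
  congr 1
  ext e
  simp [and_comm]

theorem payoff_subdiv_image_inl_of_isRegularOfDegree {d : ℕ} (hreg : G.IsRegularOfDegree d)
    (p : ℝ) (S : Finset V) :
    payoff p 1 (subdiv G) (subdivAcc G) (Sum.inl '' (S : Set V)) =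
      #(G.induce (S : Set V)).edgeFinset - #S * (d - p) := by
  have hsum := G.sum_degree_eq_card_incident_add_card_induce S
  rw [sum_congr rfl fun v _ => hreg v, sum_const, smul_eq_mul] at hsum
  have hsum' : (#S * d : ℝ) = #{e ∈ G.edgeFinset | ∃ v ∈ S, v ∈ e} +
      #(G.induce (S : Set V)).edgeFinset := by exact_mod_cast hsum
  rw [payoff_subdiv_image_inl]
  linear_combination hsum'

end Subdivision

theorem eq_and_eq_choose_two_of_mul_lt {s m k : ℕ} {ε : ℝ} (hεk : ε < 1 / (k : ℝ) ^ 2)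
    (hs : s ≤ k) (hm : m ≤ s.choose 2) (hlt : (s : ℝ) * (((k : ℝ) - 1) / 2 - ε) < m) :
    s = k ∧ m = k.choose 2 := by
  have hm' : (m : ℝ) ≤ s * (s - 1) / 2 := by
    rw [← Nat.cast_choose_two]
    exact_mod_cast hm
  have hs0 : 0 < s := Nat.pos_of_ne_zero fun h => by
    subst h
    have hm0 : m = 0 := by simpa using hm
    simp [hm0] at hlt
  have hs1 : (1 : ℝ) ≤ s := by exact_mod_cast hs0
  have hkR : (1 : ℝ) ≤ k := by exact_mod_cast hs0.trans_le hs
  have hkε : (k : ℝ) * ε < 1 := by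
    have : (k : ℝ) * ε < k * (1 / k ^ 2) := mul_lt_mul_of_pos_left hεk (by linarith)
    rw [mul_one_div, pow_two, div_mul_cancel_left₀ (by positivity)] at this
    exact this.trans_le (inv_le_one_of_one_le₀ hkR)
  have hgap : (k : ℝ) - s < 2 * ε := by nlinarith
  have hsk : s = k := by
    by_contra hne
    have hsk : (s : ℝ) + 1 ≤ k := by exact_mod_cast (by omega : s + 1 ≤ k)
    nlinarith
  subst hsk
  refine ⟨rfl, le_antisymm hm ?_⟩
  have : ((s.choose 2 : ℕ) : ℝ) < m + 1 := by
    rw [Nat.cast_choose_two]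
    nlinarith
  exact Nat.lt_succ_iff.mp (by exact_mod_cast this)

theorem clique_iff_positive_budgeted_seed_set_general {V : Type*} [Fintype V]
    [DecidableEq V] (G : SimpleGraph V) [DecidableRel G.Adj] (d k : ℕ)
    (hreg : ∀ v, G.degree v = d) (hk : 2 ≤ k)
    (p ε : ℝ) (hε : 0 < ε) (hεk : ε < 1 / (k : ℝ) ^ 2)
    (hp : p = (d : ℝ) - ((k : ℝ) - 1) / 2 + ε) :
    (∃ S : Finset V, S.card = k ∧ ∀ i ∈ S, ∀ j ∈ S, i ≠ j → G.Adj i j) ↔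
    (∃ S : Finset V, S.card ≤ k ∧
      0 < payoff p 1 (subdiv G) (subdivAcc G) (Sum.inl '' (S : Set V))) := by
  have hpayoff (S : Finset V) :
      payoff p 1 (subdiv G) (subdivAcc G) (Sum.inl '' (S : Set V)) =
        #(G.induce (S : Set V)).edgeFinset - #S * (((k : ℝ) - 1) / 2 - ε) := by
    rw [payoff_subdiv_image_inl_of_isRegularOfDegree G hreg, hp]
    ring
  constructor
  · rintro ⟨S, hcard, hclique⟩
    refine ⟨S, hcard.le, ?_⟩
    have hk0 : (0 : ℝ) < k := by exact_mod_cast (by omega : 0 < k)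
    rw [hpayoff, (G.card_edgeFinset_induce_eq_iff_isClique S).2 hclique, hcard,
      Nat.cast_choose_two]
    linarith [mul_pos hk0 hε]
  · rintro ⟨S, hcard, hpos⟩
    rw [hpayoff, sub_pos] at hpos
    obtain ⟨rfl, hedges⟩ :=
      eq_and_eq_choose_two_of_mul_lt hεk hcard (G.card_edgeFinset_induce_le S) hpos
    exact ⟨S, rfl, (G.card_edgeFinset_induce_eq_iff_isClique S).1 hedges⟩

/-- A `d`-regular graph `G` (with `d ≥ k ≥ 2`) contains a
`k`-clique if and only if the subdivided instance `G'` (with `q = 1`,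
`p = d − (k−1)/2 + ε`, `0 < ε < 1/k²`) admits a seed set `S` of original
(accepting) nodes of size at most `k` with `π(S) > 0`. -/
theorem clique_iff_positive_budgeted_seed_set {V : Type*} [Fintype V]
    [DecidableEq V] (G : SimpleGraph V) [DecidableRel G.Adj] (d k : ℕ)
    (hreg : ∀ v, G.degree v = d) (hk : 2 ≤ k) (hkd : k ≤ d)
    (p ε : ℝ) (hε : 0 < ε) (hεk : ε < 1 / (k : ℝ) ^ 2)
    (hp : p = (d : ℝ) - ((k : ℝ) - 1) / 2 + ε) :
    (∃ S : Finset V, S.card = k ∧ ∀ i ∈ S, ∀ j ∈ S, i ≠ j → G.Adj i j) ↔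
    (∃ S : Finset V, S.card ≤ k ∧
      0 < payoff p 1 (subdiv G) (subdivAcc G) (Sum.inl '' (S : Set V))) :=
  clique_iff_positive_budgeted_seed_set_general G d k hreg hk p ε hε hεk hp
end
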